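/- arXiv:2008.00942 — 4 statements merged into one kernel-verified Lean document; each statement's English description precedes it below -/
import Mathlib

section
/- Let d_B, m be positive integers and let G : ℝ^{d_B} → ℝ^{m} be a differentiable map that is L_h-Lipschitz and satisfies the second-order smoothness condition with constant L_G, where L_h, L_G > 0. Let (γ, C) be a coordinate coding on ℝ^{d_B} and let h ∈ ℝ^{d_B} with physical approximation r(h) = Σ_{v∈C} γ_v v. Then ‖G(Σ_{v∈C} γ_v v) − Σ_{v∈C} γ_v G(v)‖ ≤ 2 L_h ‖h − r(h)‖ + L_G Σ_{v∈C} |γ_v| ‖v − r(h)‖². -/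
open scoped BigOperators

/-- **Lemma 1 (Generator Approximation).**
If `G : ℝ^{d_B} → ℝ^m` is a differentiable `L_h`-Lipschitz map satisfying the second-order
smoothness condition with constant `L_G`, and `(γ, C)` is a coordinate coding with
`r h = ∑ v ∈ C, γ v • v`, then
`‖G (∑ v ∈ C, γ v • v) − ∑ v ∈ C, γ v • G v‖ ≤ 2 L_h ‖h − r h‖ + L_G ∑ v ∈ C, |γ v| ‖v − r h‖²`. -/
theorem generator_approximation
    (dB m : ℕ) (hdB : 0 < dB) (hm : 0 < m)
    (G : EuclideanSpace ℝ (Fin dB) → EuclideanSpace ℝ (Fin m))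
    (Lh LG : ℝ) (hLh : 0 < Lh) (hLG : 0 < LG)
    (hdiff : Differentiable ℝ G)
    (hlip : ∀ x y, ‖G x - G y‖ ≤ Lh * ‖x - y‖)
    (hsmooth : ∀ x y, ‖G y - G x - fderiv ℝ G x (y - x)‖ ≤ LG * ‖x - y‖ ^ 2)
    (C : Finset (EuclideanSpace ℝ (Fin dB)))
    (γ : EuclideanSpace ℝ (Fin dB) → ℝ)
    (hγ : ∑ v ∈ C, γ v = 1)
    (h : EuclideanSpace ℝ (Fin dB)) :
    ‖G (∑ v ∈ C, γ v • v) - ∑ v ∈ C, γ v • G v‖ ≤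
      2 * Lh * ‖h - ∑ v ∈ C, γ v • v‖ +
        LG * ∑ v ∈ C, |γ v| * ‖v - ∑ w ∈ C, γ w • w‖ ^ 2 := by
  set r : EuclideanSpace ℝ (Fin dB) := ∑ v ∈ C, γ v • v with hr
  set f := fderiv ℝ G r with hf
  have hzero : ∑ v ∈ C, γ v • (v - r) = 0 := by
    simp only [smul_sub, Finset.sum_sub_distrib, ← Finset.sum_smul, hγ, one_smul, ← hr,
      sub_self]
  have key : G r - ∑ v ∈ C, γ v • G v = -∑ v ∈ C, γ v • (G v - G r - f (v - r)) := by
    have hfsum : ∑ v ∈ C, γ v • f (v - r) = 0 := by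
      calc ∑ v ∈ C, γ v • f (v - r) = ∑ v ∈ C, f (γ v • (v - r)) := by
            simp [f.map_smul]
        _ = f (∑ v ∈ C, γ v • (v - r)) := (map_sum f _ C).symm
        _ = 0 := by rw [hzero, map_zero]
    simp only [smul_sub, Finset.sum_sub_distrib, hfsum, ← Finset.sum_smul, hγ, one_smul]
    abel
  have hbound : ‖G r - ∑ v ∈ C, γ v • G v‖ ≤ LG * ∑ v ∈ C, |γ v| * ‖v - r‖ ^ 2 := by
    rw [key, norm_neg]
    calc ‖∑ v ∈ C, γ v • (G v - G r - f (v - r))‖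
        ≤ ∑ v ∈ C, ‖γ v • (G v - G r - f (v - r))‖ := norm_sum_le _ _
      _ ≤ ∑ v ∈ C, |γ v| * (LG * ‖r - v‖ ^ 2) := by
          apply Finset.sum_le_sum
          intro v _
          rw [norm_smul, Real.norm_eq_abs]
          exact mul_le_mul_of_nonneg_left (hsmooth r v) (abs_nonneg _)
      _ = LG * ∑ v ∈ C, |γ v| * ‖v - r‖ ^ 2 := by
          rw [Finset.mul_sum]
          congr 1; ext v; rw [norm_sub_rev r v]; ring
  have h1 : 0 ≤ 2 * Lh * ‖h - r‖ := by positivity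
  linarith
end

section
/- Let d_B, m be positive integers, let G : ℝ^{d_B} → ℝ^{m} be a differentiable map that is L_h-Lipschitz and satisfies the second-order smoothness condition with constant L_G (L_h, L_G > 0), and let D : ℝ^{m} → ℝ be L_x-Lipschitz (L_x > 0). Let (γ, C) be a coordinate coding on ℝ^{d_B} and let h ∈ ℝ^{d_B} with physical approximation r(h) = Σ_{v∈C} γ_v v. Then |D(G(h)) − D(Σ_{v∈C} γ_v G(v))| ≤ L_x L_h ‖h − r(h)‖ + L_x L_G Σ_{v∈C} |γ_v| ‖v − r(h)‖². -/
/-!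
Put `r = ∑ γ v • v`. Since the weights sum to one, `∑ γ v • (v - r) = 0`, so the first-order
Taylor terms `DG r (v - r)` cancel in `∑ γ v • G v - G r`, leaving a weighted sum of
second-order remainders, each at most `L_G ‖v - r‖²`. The triangle inequality through `G r`
and the Lipschitz bounds on `G` and `D` then give the estimate.
-/

section AffineCombination

variable {E F : Type*}

section Module

variable [AddCommGroup E] [Module ℝ E] [AddCommGroup F] [Module ℝ F]

theorem Finset.sum_smul_sub_sum_smul_eq_zero {ι : Type*} (C : Finset ι) (γ : ι → ℝ)
    (x : ι → E) (hγ : ∑ v ∈ C, γ v = 1) :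
    ∑ v ∈ C, γ v • (x v - ∑ w ∈ C, γ w • x w) = 0 := by
  simp only [smul_sub, Finset.sum_sub_distrib, ← Finset.sum_smul, hγ, one_smul, sub_self]

theorem sum_smul_apply_sub_apply_sum_smul (G : E → F) (L : E →ₗ[ℝ] F) (C : Finset E)
    (γ : E → ℝ) (hγ : ∑ v ∈ C, γ v = 1) :
    ∑ v ∈ C, γ v • G v - G (∑ w ∈ C, γ w • w) =
      ∑ v ∈ C, γ v • (G v - G (∑ w ∈ C, γ w • w) - L (v - ∑ w ∈ C, γ w • w)) := by
  set r := ∑ w ∈ C, γ w • w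
  have hlinear : ∑ v ∈ C, γ v • L (v - r) = 0 := by
    simp only [← map_smul, ← map_sum]
    exact (congrArg L (C.sum_smul_sub_sum_smul_eq_zero γ id hγ)).trans (map_zero L)
  have hconst : ∑ v ∈ C, γ v • G r = G r := by
    rw [← Finset.sum_smul, hγ, one_smul]
  simp only [smul_sub, Finset.sum_sub_distrib, hlinear, hconst, sub_zero]

end Module

variable [NormedAddCommGroup E] [NormedSpace ℝ E] [NormedAddCommGroup F] [NormedSpace ℝ F]

theorem norm_apply_sum_smul_sub_sum_smul_apply_le (G : E → F) (L : E →ₗ[ℝ] F)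
    (C : Finset E) (γ : E → ℝ) (hγ : ∑ v ∈ C, γ v = 1) (K : ℝ)
    (hremainder : ∀ v ∈ C, ‖G v - G (∑ w ∈ C, γ w • w) - L (v - ∑ w ∈ C, γ w • w)‖ ≤
      K * ‖v - ∑ w ∈ C, γ w • w‖ ^ 2) :
    ‖G (∑ w ∈ C, γ w • w) - ∑ v ∈ C, γ v • G v‖ ≤
      K * ∑ v ∈ C, |γ v| * ‖v - ∑ w ∈ C, γ w • w‖ ^ 2 := by
  rw [norm_sub_rev, sum_smul_apply_sub_apply_sum_smul G L C γ hγ, Finset.mul_sum]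
  refine (norm_sum_le _ _).trans (Finset.sum_le_sum fun v hv => ?_)
  rw [norm_smul, Real.norm_eq_abs, mul_left_comm]
  exact mul_le_mul_of_nonneg_left (hremainder v hv) (abs_nonneg _)

end AffineCombination

theorem discriminator_generator_approximation_general
    (dB m : ℕ)
    (G : EuclideanSpace ℝ (Fin dB) → EuclideanSpace ℝ (Fin m))
    (Lh LG Lx : ℝ) (hLx : 0 < Lx)
    (hlip : ∀ x y, ‖G x - G y‖ ≤ Lh * ‖x - y‖)
    (hsmooth : ∀ x y, ‖G y - G x - fderiv ℝ G x (y - x)‖ ≤ LG * ‖x - y‖ ^ 2)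
    (D : EuclideanSpace ℝ (Fin m) → ℝ)
    (hDlip : ∀ x y, |D x - D y| ≤ Lx * ‖x - y‖)
    (C : Finset (EuclideanSpace ℝ (Fin dB)))
    (γ : EuclideanSpace ℝ (Fin dB) → ℝ)
    (hγ : ∑ v ∈ C, γ v = 1)
    (h : EuclideanSpace ℝ (Fin dB)) :
    |D (G h) - D (∑ v ∈ C, γ v • G v)| ≤
      Lx * Lh * ‖h - ∑ v ∈ C, γ v • v‖ +
        Lx * LG * ∑ v ∈ C, |γ v| * ‖v - ∑ w ∈ C, γ w • w‖ ^ 2 := by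
  set r := ∑ w ∈ C, γ w • w
  have hcoding : ‖G r - ∑ v ∈ C, γ v • G v‖ ≤ LG * ∑ v ∈ C, |γ v| * ‖v - r‖ ^ 2 :=
    norm_apply_sum_smul_sub_sum_smul_apply_le G (fderiv ℝ G r) C γ hγ LG fun v _ => by
      rw [ContinuousLinearMap.coe_coe, norm_sub_rev v]
      exact hsmooth r v
  calc |D (G h) - D (∑ v ∈ C, γ v • G v)|
      ≤ Lx * ‖G h - ∑ v ∈ C, γ v • G v‖ := hDlip _ _
    _ ≤ Lx * (‖G h - G r‖ + ‖G r - ∑ v ∈ C, γ v • G v‖) :=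
        mul_le_mul_of_nonneg_left (norm_sub_le_norm_sub_add_norm_sub _ _ _) hLx.le
    _ ≤ Lx * (Lh * ‖h - r‖ + LG * ∑ v ∈ C, |γ v| * ‖v - r‖ ^ 2) :=
        mul_le_mul_of_nonneg_left (add_le_add (hlip h r) hcoding) hLx.le
    _ = Lx * Lh * ‖h - r‖ + Lx * LG * ∑ v ∈ C, |γ v| * ‖v - r‖ ^ 2 := by ring

/-- **Proposition (discriminator–generator approximation, supplementary Section A).**
If `G : ℝ^{d_B} → ℝ^m` is a differentiable `L_h`-Lipschitz map satisfying the second-order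
smoothness condition with constant `L_G`, `D : ℝ^m → ℝ` is `L_x`-Lipschitz, and `(γ, C)` is a
coordinate coding with `r h = ∑ v ∈ C, γ v • v`, then
`|D (G h) − D (∑ v ∈ C, γ v • G v)| ≤ L_x L_h ‖h − r h‖ + L_x L_G ∑ v ∈ C, |γ v| ‖v − r h‖²`. -/
theorem discriminator_generator_approximation
    (dB m : ℕ) (hdB : 0 < dB) (hm : 0 < m)
    (G : EuclideanSpace ℝ (Fin dB) → EuclideanSpace ℝ (Fin m))
    (Lh LG Lx : ℝ) (hLh : 0 < Lh) (hLG : 0 < LG) (hLx : 0 < Lx)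
    (hdiff : Differentiable ℝ G)
    (hlip : ∀ x y, ‖G x - G y‖ ≤ Lh * ‖x - y‖)
    (hsmooth : ∀ x y, ‖G y - G x - fderiv ℝ G x (y - x)‖ ≤ LG * ‖x - y‖ ^ 2)
    (D : EuclideanSpace ℝ (Fin m) → ℝ)
    (hDlip : ∀ x y, |D x - D y| ≤ Lx * ‖x - y‖)
    (C : Finset (EuclideanSpace ℝ (Fin dB)))
    (γ : EuclideanSpace ℝ (Fin dB) → ℝ)
    (hγ : ∑ v ∈ C, γ v = 1)
    (h : EuclideanSpace ℝ (Fin dB)) :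
    |D (G h) - D (∑ v ∈ C, γ v • G v)| ≤
      Lx * Lh * ‖h - ∑ v ∈ C, γ v • v‖ +
        Lx * LG * ∑ v ∈ C, |γ v| * ‖v - ∑ w ∈ C, γ w • w‖ ^ 2 :=
  discriminator_generator_approximation_general dB m G Lh LG Lx hLx hlip hsmooth D hDlip C γ hγ h
end

section
/- Let d_B, m be positive integers, let G : ℝ^{d_B} → ℝ^{m} be a differentiable map that is L_h-Lipschitz and satisfies the second-order smoothness condition with constant L_G (L_h, L_G > 0), let D : ℝ^{m} → ℝ be L_x-Lipschitz (L_x > 0), and let φ : ℝ → ℝ be L_φ-Lipschitz (L_φ > 0). Let (γ, C) be a coordinate coding on ℝ^{d_B} and let h ∈ ℝ^{d_B} with physical approximation r(h) = Σ_{v∈C} γ_v v. Then |φ(1 − D(G(h))) − φ(1 − D(Σ_{v∈C} γ_v G(v)))| ≤ L_φ L_x ( L_h ‖h − r(h)‖ + L_G Σ_{v∈C} |γ_v| ‖v − r(h)‖² ). -/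
open scoped BigOperators

/-- **Pointwise bound used in the proof of the supplementary generalization theorem.**
If `G : ℝ^{d_B} → ℝ^m` is a differentiable `L_h`-Lipschitz map satisfying the second-order
smoothness condition with constant `L_G`, `D : ℝ^m → ℝ` is `L_x`-Lipschitz, `φ : ℝ → ℝ` is
`L_φ`-Lipschitz, and `(γ, C)` is a coordinate coding with `r h = ∑ v ∈ C, γ v • v`, then
`|φ(1 − D (G h)) − φ(1 − D (∑ v ∈ C, γ v • G v))|
  ≤ L_φ L_x (L_h ‖h − r h‖ + L_G ∑ v ∈ C, |γ v| ‖v − r h‖²)`. -/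
theorem measuring_function_discriminator_generator_bound
    (dB m : ℕ) (hdB : 0 < dB) (hm : 0 < m)
    (G : EuclideanSpace ℝ (Fin dB) → EuclideanSpace ℝ (Fin m))
    (Lh LG Lx Lφ : ℝ) (hLh : 0 < Lh) (hLG : 0 < LG) (hLx : 0 < Lx) (hLφ : 0 < Lφ)
    (hdiff : Differentiable ℝ G)
    (hlip : ∀ x y, ‖G x - G y‖ ≤ Lh * ‖x - y‖)
    (hsmooth : ∀ x y, ‖G y - G x - fderiv ℝ G x (y - x)‖ ≤ LG * ‖x - y‖ ^ 2)
    (D : EuclideanSpace ℝ (Fin m) → ℝ)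
    (hDlip : ∀ x y, |D x - D y| ≤ Lx * ‖x - y‖)
    (φ : ℝ → ℝ)
    (hφlip : ∀ s t, |φ s - φ t| ≤ Lφ * |s - t|)
    (C : Finset (EuclideanSpace ℝ (Fin dB)))
    (γ : EuclideanSpace ℝ (Fin dB) → ℝ)
    (hγ : ∑ v ∈ C, γ v = 1)
    (h : EuclideanSpace ℝ (Fin dB)) :
    |φ (1 - D (G h)) - φ (1 - D (∑ v ∈ C, γ v • G v))| ≤
      Lφ * Lx * (Lh * ‖h - ∑ v ∈ C, γ v • v‖ +
        LG * ∑ v ∈ C, |γ v| * ‖v - ∑ w ∈ C, γ w • w‖ ^ 2) := by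
  set r : EuclideanSpace ℝ (Fin dB) := ∑ v ∈ C, γ v • v with hr
  set S : EuclideanSpace ℝ (Fin m) := ∑ v ∈ C, γ v • G v with hS
  have key : ‖G h - S‖ ≤ Lh * ‖h - r‖ + LG * ∑ v ∈ C, |γ v| * ‖v - r‖ ^ 2 := by
    have h1 : ‖G h - G r‖ ≤ Lh * ‖h - r‖ := hlip h r
    have hzero : (fderiv ℝ G r) (∑ v ∈ C, γ v • (v - r)) = 0 := by
      have : (∑ v ∈ C, γ v • (v - r)) = 0 := by
        simp only [smul_sub, Finset.sum_sub_distrib, ← Finset.sum_smul, hγ, one_smul, ← hr]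
        abel
      rw [this]; simp
    have h2 : ‖G r - S‖ ≤ LG * ∑ v ∈ C, |γ v| * ‖v - r‖ ^ 2 := by
      have heq : G r - S = -(∑ v ∈ C, γ v • (G v - G r - fderiv ℝ G r (v - r))) := by
        have : ∑ v ∈ C, γ v • (G v - G r - fderiv ℝ G r (v - r))
            = S - G r - fderiv ℝ G r (∑ v ∈ C, γ v • (v - r)) := by
          simp only [smul_sub, Finset.sum_sub_distrib, map_sum, map_smul, ← Finset.sum_smul,
            hγ, one_smul, ← hS]
          congr 1
          simp only [map_sub, map_sum, map_smul, smul_sub, Finset.sum_sub_distrib,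
            ← Finset.sum_smul, hγ, one_smul]
        rw [this, hzero]
        abel
      rw [heq, norm_neg]
      calc ‖∑ v ∈ C, γ v • (G v - G r - fderiv ℝ G r (v - r))‖
          ≤ ∑ v ∈ C, ‖γ v • (G v - G r - fderiv ℝ G r (v - r))‖ := norm_sum_le _ _
        _ ≤ ∑ v ∈ C, |γ v| * (LG * ‖r - v‖ ^ 2) := by
            apply Finset.sum_le_sum
            intro v hv
            rw [norm_smul, Real.norm_eq_abs]
            exact mul_le_mul_of_nonneg_left (hsmooth r v) (abs_nonneg _)
        _ = LG * ∑ v ∈ C, |γ v| * ‖v - r‖ ^ 2 := by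
            rw [Finset.mul_sum]
            congr 1; ext v; rw [norm_sub_rev]; ring
    calc ‖G h - S‖ ≤ ‖G h - G r‖ + ‖G r - S‖ := norm_sub_le_norm_sub_add_norm_sub _ _ _
      _ ≤ Lh * ‖h - r‖ + LG * ∑ v ∈ C, |γ v| * ‖v - r‖ ^ 2 := add_le_add h1 h2
  calc |φ (1 - D (G h)) - φ (1 - D S)| ≤ Lφ * |(1 - D (G h)) - (1 - D S)| := hφlip _ _
    _ = Lφ * |D (G h) - D S| := by rw [show (1 - D (G h)) - (1 - D S) = -(D (G h) - D S) by ring, abs_neg]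
    _ ≤ Lφ * (Lx * ‖G h - S‖) := by
        exact mul_le_mul_of_nonneg_left (hDlip _ _) hLφ.le
    _ ≤ Lφ * (Lx * (Lh * ‖h - r‖ + LG * ∑ v ∈ C, |γ v| * ‖v - r‖ ^ 2)) := by
        apply mul_le_mul_of_nonneg_left _ hLφ.le
        exact mul_le_mul_of_nonneg_left key hLx.le
    _ = Lφ * Lx * (Lh * ‖h - r‖ + LG * ∑ v ∈ C, |γ v| * ‖v - r‖ ^ 2) := by ring
end

section
/- Let d_B, m be positive integers. Let F be a nonempty set of 1-Lipschitz measurable functions D : ℝ^{m} → [0,1], and let φ : ℝ → ℝ be a nondecreasing L_φ-Lipschitz function with |φ(t)| ≤ Δ for all t ∈ [0,1]. Let G : ℝ^{d_B} → ℝ^{m} be a differentiable map that is L_h-Lipschitz and satisfies the second-order smoothness condition with constant L_G. Let C ⊂ ℝ^{d_B} be a finite set of anchor points, and let γ : ℝ^{d_B} → (C → ℝ) be a measurable coefficient map with Σ_{v∈C} γ_v(h) = 1 for every h; write r(h) = Σ_{v∈C} γ_v(h) v and g(h) = Σ_{v∈C} γ_v(h) G(v). Let H be a probability measure on ℝ^{d_B}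 such that the function h ↦ L_h ‖h − r(h)‖ + L_G Σ_{v∈C} |γ_v(h)| ‖v − r(h)‖² is integrable with respect to H, and let ν be any probability measure on ℝ^{m}. Then d_{F,φ}(H.map g, ν) ≤ d_{F,φ}(H.map G, ν) + L_φ ∫ ( L_h ‖h − r(h)‖ + L_G Σ_{v∈C} |γ_v(h)| ‖v − r(h)‖² ) dH(h). -/
open MeasureTheory
open scoped BigOperators

/-!
Locally the generator is affine up to a quadratic error: since the weights `γ h` sum to one,
the first-order terms `DG(r h)(v - r h)` cancel in `∑ γ_v(h) (G v - G (r h))`, so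
`‖g h - G (r h)‖ ≤ L_G ∑ |γ_v(h)| ‖v - r h‖²`, and Lipschitz continuity adds
`‖G (r h) - G h‖ ≤ L_h ‖h - r h‖`. A discriminator `D` is 1-Lipschitz and `φ` is
`L_φ`-Lipschitz, so for each `D` the two generated terms of the distance differ by at most
`L_φ` times the expected pointwise bound; taking the supremum over `D` gives the claim.
-/

/-- The neural network distance `d_{F,φ}(μ, ν)` between a generated distribution `μ` and a real
distribution `ν`, with discriminator class `F` and measuring function `φ` (the constant
`2 φ(1/2)` is omitted, as in the paper). -/
noncomputable def nnDist {X : Type*} [MeasurableSpace X] (F : Set (X → ℝ)) (φ : ℝ → ℝ)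
    (μ ν : Measure X) : ℝ :=
  ⨆ D : F, |(∫ x, φ ((D : X → ℝ) x) ∂ν) + ∫ x, φ (1 - (D : X → ℝ) x) ∂μ|

section LocalCoordinateCoding

variable {E V : Type*} [NormedAddCommGroup E] [NormedSpace ℝ E]
  [NormedAddCommGroup V] [NormedSpace ℝ V] {G : E → V} {C : Finset E} {w : E → ℝ}

theorem sum_smul_sub_sum_smul_eq_zero (hw : ∑ v ∈ C, w v = 1) :
    ∑ v ∈ C, w v • (v - ∑ u ∈ C, w u • u) = 0 := by
  rw [Finset.sum_congr rfl fun v _ => smul_sub (w v) v _, Finset.sum_sub_distrib,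
    ← Finset.sum_smul, hw, one_smul, sub_self]

theorem norm_sum_smul_apply_sub_apply_sum_smul_le {L : E → E →L[ℝ] V} {LG : ℝ}
    (hG : ∀ x y, ‖G y - G x - L x (y - x)‖ ≤ LG * ‖x - y‖ ^ 2) (hw : ∑ v ∈ C, w v = 1) :
    ‖∑ v ∈ C, w v • G v - G (∑ v ∈ C, w v • v)‖ ≤
      LG * ∑ v ∈ C, |w v| * ‖v - ∑ u ∈ C, w u • u‖ ^ 2 := by
  set r := ∑ v ∈ C, w v • v
  have hcentered : ∑ v ∈ C, w v • (v - r) = 0 := sum_smul_sub_sum_smul_eq_zero hw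
  have hlinear : ∑ v ∈ C, w v • L r (v - r) = 0 := by
    simp only [← map_smul, ← map_sum, hcentered, map_zero]
  have hexpand : ∑ v ∈ C, w v • G v - G r = ∑ v ∈ C, w v • (G v - G r - L r (v - r)) := by
    simp only [smul_sub, Finset.sum_sub_distrib, ← Finset.sum_smul, hw, one_smul, hlinear,
      sub_zero]
  calc ‖∑ v ∈ C, w v • G v - G r‖
      ≤ ∑ v ∈ C, |w v| * ‖G v - G r - L r (v - r)‖ := by
        rw [hexpand]
        refine (norm_sum_le _ _).trans_eq (Finset.sum_congr rfl fun v _ => ?_)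
        rw [norm_smul, Real.norm_eq_abs]
    _ ≤ ∑ v ∈ C, |w v| * (LG * ‖v - r‖ ^ 2) := by
        gcongr with v
        rw [← norm_sub_rev r v]
        exact hG r v
    _ = LG * ∑ v ∈ C, |w v| * ‖v - r‖ ^ 2 := by
        rw [Finset.mul_sum]
        exact Finset.sum_congr rfl fun v _ => by ring

theorem norm_sum_smul_apply_sub_apply_le {L : E → E →L[ℝ] V} {Lh LG : ℝ}
    (hGlip : ∀ x y, ‖G x - G y‖ ≤ Lh * ‖x - y‖)
    (hG : ∀ x y, ‖G y - G x - L x (y - x)‖ ≤ LG * ‖x - y‖ ^ 2) (hw : ∑ v ∈ C, w v = 1) (h : E) :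
    ‖∑ v ∈ C, w v • G v - G h‖ ≤
      Lh * ‖h - ∑ v ∈ C, w v • v‖ + LG * ∑ v ∈ C, |w v| * ‖v - ∑ u ∈ C, w u • u‖ ^ 2 := by
  set r := ∑ v ∈ C, w v • v
  calc ‖∑ v ∈ C, w v • G v - G h‖ ≤ ‖∑ v ∈ C, w v • G v - G r‖ + ‖G r - G h‖ :=
        norm_sub_le_norm_sub_add_norm_sub _ _ _
    _ ≤ LG * ∑ v ∈ C, |w v| * ‖v - r‖ ^ 2 + Lh * ‖h - r‖ := by
        gcongr
        · exact norm_sum_smul_apply_sub_apply_sum_smul_le hG hw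
        · rw [norm_sub_rev h r]
          exact hGlip r h
    _ = _ := add_comm _ _

end LocalCoordinateCoding

theorem abs_integral_map_sub_integral_map_le {Z Y : Type*} [MeasurableSpace Z]
    [NormedAddCommGroup Y] [MeasurableSpace Y] {H : Measure Z} [IsFiniteMeasure H]
    {f g : Z → Y} (hf : AEMeasurable f H) (hg : AEMeasurable g H)
    {ψ : Y → ℝ} (hψ : Measurable ψ) {B : ℝ} (hψB : ∀ y, |ψ y| ≤ B)
    {K : ℝ} (hK : 0 ≤ K) (hψlip : ∀ y y', |ψ y - ψ y'| ≤ K * ‖y - y'‖)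
    {M : Z → ℝ} (hM : Integrable M H) (hfg : ∀ z, ‖f z - g z‖ ≤ M z) :
    |(∫ y, ψ y ∂H.map f) - ∫ y, ψ y ∂H.map g| ≤ K * ∫ z, M z ∂H := by
  have hint : ∀ {k : Z → Y}, AEMeasurable k H → Integrable (fun z => ψ (k z)) H :=
    fun {k} hk => .of_bound (hψ.comp_aemeasurable hk).aestronglyMeasurable B (ae_of_all _ fun z => hψB (k z))
  rw [integral_map hf hψ.aestronglyMeasurable, integral_map hg hψ.aestronglyMeasurable,
    ← integral_sub (hint hf) (hint hg), ← integral_const_mul]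
  refine (abs_integral_le_integral_abs).trans
    (integral_mono ((hint hf).sub (hint hg)).abs (hM.const_mul K) fun z => ?_)
  exact (hψlip _ _).trans (mul_le_mul_of_nonneg_left (hfg z) hK)

section NeuralNetDistance

variable {X : Type*} [MeasurableSpace X] {F : Set (X → ℝ)} {φ : ℝ → ℝ}

theorem bddAbove_range_nnDist {Δ : ℝ} (hFrange : ∀ D ∈ F, ∀ x, D x ∈ Set.Icc (0 : ℝ) 1)
    (hφbound : ∀ t ∈ Set.Icc (0 : ℝ) 1, |φ t| ≤ Δ) (μ ν : Measure X)
    [IsProbabilityMeasure μ] [IsProbabilityMeasure ν] :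
    BddAbove (Set.range fun D : F =>
      |(∫ x, φ ((D : X → ℝ) x) ∂ν) + ∫ x, φ (1 - (D : X → ℝ) x) ∂μ|) := by
  have hintegral : ∀ (ρ : Measure X) [IsProbabilityMeasure ρ] (f : X → ℝ),
      (∀ x, f x ∈ Set.Icc (0 : ℝ) 1) → |∫ x, φ (f x) ∂ρ| ≤ Δ := fun ρ _ f hf => by
    simpa using norm_integral_le_of_norm_le_const (μ := ρ) (f := fun x => φ (f x)) (C := Δ)
      (ae_of_all _ fun x => hφbound _ (hf x))
  refine ⟨Δ + Δ, ?_⟩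
  rintro _ ⟨⟨D, hD⟩, rfl⟩
  exact (abs_add_le _ _).trans (add_le_add (hintegral ν D (hFrange D hD))
    (hintegral μ _ fun x => Set.Icc.mem_iff_one_sub_mem.mp (hFrange D hD x)))

theorem nnDist_le_nnDist_add [Nonempty F] {μ μ' ν : Measure X} {c : ℝ}
    (hbdd : BddAbove (Set.range fun D : F =>
      |(∫ x, φ ((D : X → ℝ) x) ∂ν) + ∫ x, φ (1 - (D : X → ℝ) x) ∂μ|))
    (h : ∀ D ∈ F, |(∫ x, φ (1 - D x) ∂μ') - ∫ x, φ (1 - D x) ∂μ| ≤ c) :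
    nnDist F φ μ' ν ≤ nnDist F φ μ ν + c := by
  refine ciSup_le fun D => ?_
  calc |(∫ x, φ ((D : X → ℝ) x) ∂ν) + ∫ x, φ (1 - (D : X → ℝ) x) ∂μ'|
      ≤ |(∫ x, φ ((D : X → ℝ) x) ∂ν) + ∫ x, φ (1 - (D : X → ℝ) x) ∂μ| +
          |(∫ x, φ (1 - (D : X → ℝ) x) ∂μ') - ∫ x, φ (1 - (D : X → ℝ) x) ∂μ| := by
        simpa using abs_add_le ((∫ x, φ ((D : X → ℝ) x) ∂ν) + ∫ x, φ (1 - (D : X → ℝ) x) ∂μ)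
          ((∫ x, φ (1 - (D : X → ℝ) x) ∂μ') - ∫ x, φ (1 - (D : X → ℝ) x) ∂μ)
    _ ≤ nnDist F φ μ ν + c := add_le_add (le_ciSup hbdd D) (h D D.2)

end NeuralNetDistance

theorem nnDist_lcc_generator_bound_general
    (dB m : ℕ)
    (F : Set (EuclideanSpace ℝ (Fin m) → ℝ)) (hF : F.Nonempty)
    (hFmeas : ∀ D ∈ F, Measurable D)
    (hFlip : ∀ D ∈ F, ∀ x y, |D x - D y| ≤ ‖x - y‖)
    (hFrange : ∀ D ∈ F, ∀ x, D x ∈ Set.Icc (0 : ℝ) 1)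
    (φ : ℝ → ℝ) (hφmono : Monotone φ) (Lφ : ℝ) (hLφ : 0 < Lφ)
    (hφlip : ∀ s t, |φ s - φ t| ≤ Lφ * |s - t|)
    (Δ : ℝ) (hφbound : ∀ t ∈ Set.Icc (0 : ℝ) 1, |φ t| ≤ Δ)
    (G : EuclideanSpace ℝ (Fin dB) → EuclideanSpace ℝ (Fin m))
    (Lh LG : ℝ)
    (hGdiff : Differentiable ℝ G)
    (hGlip : ∀ x y, ‖G x - G y‖ ≤ Lh * ‖x - y‖)
    (hGsmooth : ∀ x y, ‖G y - G x - fderiv ℝ G x (y - x)‖ ≤ LG * ‖x - y‖ ^ 2)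
    (C : Finset (EuclideanSpace ℝ (Fin dB)))
    (γ : EuclideanSpace ℝ (Fin dB) → EuclideanSpace ℝ (Fin dB) → ℝ)
    (hγmeas : ∀ v ∈ C, Measurable fun h => γ h v)
    (hγsum : ∀ h, ∑ v ∈ C, γ h v = 1)
    (H : Measure (EuclideanSpace ℝ (Fin dB))) [IsProbabilityMeasure H]
    (hint : Integrable (fun h =>
      Lh * ‖h - ∑ v ∈ C, γ h v • v‖ +
        LG * ∑ v ∈ C, |γ h v| * ‖v - ∑ w ∈ C, γ h w • w‖ ^ 2) H)
    (ν : Measure (EuclideanSpace ℝ (Fin m))) [IsProbabilityMeasure ν] :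
    nnDist F φ (H.map fun h => ∑ v ∈ C, γ h v • G v) ν ≤
      nnDist F φ (H.map G) ν +
        Lφ * ∫ h, (Lh * ‖h - ∑ v ∈ C, γ h v • v‖ +
          LG * ∑ v ∈ C, |γ h v| * ‖v - ∑ w ∈ C, γ h w • w‖ ^ 2) ∂H := by
  have : Nonempty F := hF.to_subtype
  have hGmeas : Measurable G := hGdiff.continuous.measurable
  have hgmeas : Measurable fun h => ∑ v ∈ C, γ h v • G v :=
    Finset.measurable_sum _ fun v hv => (hγmeas v hv).smul_const (G v)
  have : IsProbabilityMeasure (H.map G) := Measure.isProbabilityMeasure_map hGmeas.aemeasurable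
  refine nnDist_le_nnDist_add (bddAbove_range_nnDist hFrange hφbound _ _) fun D hD => ?_
  have hψlip : ∀ y y', |φ (1 - D y) - φ (1 - D y')| ≤ Lφ * ‖y - y'‖ := fun y y' =>
    calc |φ (1 - D y) - φ (1 - D y')| ≤ Lφ * |D y - D y'| := by
          simpa [abs_sub_comm] using hφlip (1 - D y) (1 - D y')
      _ ≤ Lφ * ‖y - y'‖ := mul_le_mul_of_nonneg_left (hFlip D hD y y') hLφ.le
  exact abs_integral_map_sub_integral_map_le hgmeas.aemeasurable hGmeas.aemeasurable
    (hφmono.measurable.comp (measurable_const.sub (hFmeas D hD)))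
    (fun y => hφbound _ (Set.Icc.mem_iff_one_sub_mem.mp (hFrange D hD y))) hLφ.le hψlip hint
    fun h => norm_sum_smul_apply_sub_apply_le hGlip hGsmooth (hγsum h) h

/-- **Key chained inequality in the proof of the supplementary generalization theorem
(Theorem D.1):** replacing the generator's input by its local coordinate coding costs at most
`L_φ` times the expected localization measure:
`d_{F,φ}(H.map g, ν) ≤ d_{F,φ}(H.map G, ν)
  + L_φ ∫ (L_h ‖h − r h‖ + L_G ∑_{v∈C} |γ_v(h)| ‖v − r h‖²) dH`. -/
theorem nnDist_lcc_generator_bound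
    (dB m : ℕ) (hdB : 0 < dB) (hm : 0 < m)
    (F : Set (EuclideanSpace ℝ (Fin m) → ℝ)) (hF : F.Nonempty)
    (hFmeas : ∀ D ∈ F, Measurable D)
    (hFlip : ∀ D ∈ F, ∀ x y, |D x - D y| ≤ ‖x - y‖)
    (hFrange : ∀ D ∈ F, ∀ x, D x ∈ Set.Icc (0 : ℝ) 1)
    (φ : ℝ → ℝ) (hφmono : Monotone φ) (Lφ : ℝ) (hLφ : 0 < Lφ)
    (hφlip : ∀ s t, |φ s - φ t| ≤ Lφ * |s - t|)
    (Δ : ℝ) (hΔ : 0 < Δ) (hφbound : ∀ t ∈ Set.Icc (0 : ℝ) 1, |φ t| ≤ Δ)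
    (G : EuclideanSpace ℝ (Fin dB) → EuclideanSpace ℝ (Fin m))
    (Lh LG : ℝ) (hLh : 0 < Lh) (hLG : 0 < LG)
    (hGdiff : Differentiable ℝ G)
    (hGlip : ∀ x y, ‖G x - G y‖ ≤ Lh * ‖x - y‖)
    (hGsmooth : ∀ x y, ‖G y - G x - fderiv ℝ G x (y - x)‖ ≤ LG * ‖x - y‖ ^ 2)
    (C : Finset (EuclideanSpace ℝ (Fin dB)))
    (γ : EuclideanSpace ℝ (Fin dB) → EuclideanSpace ℝ (Fin dB) → ℝ)
    (hγmeas : ∀ v ∈ C, Measurable fun h => γ h v)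
    (hγsum : ∀ h, ∑ v ∈ C, γ h v = 1)
    (H : Measure (EuclideanSpace ℝ (Fin dB))) [IsProbabilityMeasure H]
    (hint : Integrable (fun h =>
      Lh * ‖h - ∑ v ∈ C, γ h v • v‖ +
        LG * ∑ v ∈ C, |γ h v| * ‖v - ∑ w ∈ C, γ h w • w‖ ^ 2) H)
    (ν : Measure (EuclideanSpace ℝ (Fin m))) [IsProbabilityMeasure ν] :
    nnDist F φ (H.map fun h => ∑ v ∈ C, γ h v • G v) ν ≤
      nnDist F φ (H.map G) ν +
        Lφ * ∫ h, (Lh * ‖h - ∑ v ∈ C, γ h v • v‖ +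
          LG * ∑ v ∈ C, |γ h v| * ‖v - ∑ w ∈ C, γ h w • w‖ ^ 2) ∂H :=
  nnDist_lcc_generator_bound_general dB m F hF hFmeas hFlip hFrange φ hφmono Lφ hLφ hφlip Δ hφbound
    G Lh LG hGdiff hGlip hGsmooth C γ hγmeas hγsum H hint ν
end
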